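/- For every integer m and all nonnegative integers r₁, r₂, the number of quasi-particle data (with no bound on the charges) of color-type (r₂, r₁) and total energy m is equal to the sum, over all pairs (ρ, σ) where ρ = (r₁⁽ˢ⁾)_{s≥1} is a weakly decreasing eventually-zero sequence of nonnegative integers with Σ_{s≥1} r₁⁽ˢ⁾ = r₁ and σ = (r₂⁽ˢ⁾)_{s≥1} is a weakly decreasing eventually-zero sequence of nonnegative integers with Σ_{s≥1} r₂⁽ˢ⁾ = r₂, of the number of families of partitions (π⁽ˢ⁾)_{s≥1}, (τ⁽ˢ⁾)_{s≥1}, all but finitely many empty, with ℓ(π⁽ˢ⁾) ≤ r₁⁽ˢ⁾ − r₁⁽ˢ⁺¹⁾ and ℓ(τ⁽ˢ⁾) ≤ r₂⁽ˢ⁾ − r₂⁽ˢ⁺¹⁾ for all s ≥ 1, and Σ_{s≥1} |π⁽ˢ⁾| + Σ_{s≥1} |τ⁽ˢ⁾| = m − E(ρ,σ), where E(ρ,σ) = Σ_{s≥1} (r₁⁽ˢ⁾)² + Σ_{s≥1} (r₂⁽ˢ⁾)² − Σ_{s≥1} r₁⁽ˢ⁾·(r₂⁽²ˢ⁻¹⁾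 + r₂⁽²ˢ⁾). -/

import Mathlib

/-- A quasi-particle datum for type `B₂⁽¹⁾`: numbers `P₁, P₂ ≥ 0` of quasi-particles of
colors 1 and 2, charges `n_{P_i,i} ≤ … ≤ n_{1,i}` (all positive) and energies
`m_{p,i} ∈ ℤ` satisfying the difference conditions (D1)–(D4).  We use 0-based
indexing: the field value `n1 p` is the paper's `n_{p+1,1}` (so `n1 0 = n_{1,1}` is the
largest color-1 charge), and similarly for `n2`, `m1`, `m2`.  Charges and energies are
normalized to be `0` outside the index range, so that each quasi-particle datum is
represented by exactly one term of this type. -/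
structure QPData where
  P1 : ℕ
  P2 : ℕ
  n1 : ℕ → ℕ
  n2 : ℕ → ℕ
  m1 : ℕ → ℤ
  m2 : ℕ → ℤ
  n1_pos : ∀ p, p < P1 → 0 < n1 p
  n2_pos : ∀ p, p < P2 → 0 < n2 p
  n1_anti : ∀ p q, p ≤ q → q < P1 → n1 q ≤ n1 p
  n2_anti : ∀ p q, p ≤ q → q < P2 → n2 q ≤ n2 p
  n1_zero : ∀ p, P1 ≤ p → n1 p = 0
  n2_zero : ∀ p, P2 ≤ p → n2 p = 0
  m1_zero : ∀ p, P1 ≤ p → m1 p = 0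
  m2_zero : ∀ p, P2 ≤ p → m2 p = 0
  D1 : ∀ p, p < P1 →
    m1 p ≤ -(n1 p : ℤ) - 2 * ∑ p' ∈ Finset.range p, (min (n1 p) (n1 p') : ℤ)
  D2 : ∀ p, p + 1 < P1 → n1 (p + 1) = n1 p → m1 (p + 1) ≤ m1 p - 2 * (n1 p : ℤ)
  D3 : ∀ p, p < P2 →
    m2 p ≤ -(n2 p : ℤ) + ∑ q ∈ Finset.range P1, (min (2 * n1 q) (n2 p) : ℤ)
      - 2 * ∑ p' ∈ Finset.range p, (min (n2 p) (n2 p') : ℤ)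
  D4 : ∀ p, p + 1 < P2 → n2 (p + 1) = n2 p → m2 (p + 1) ≤ m2 p - 2 * (n2 p : ℤ)

/-- The color-type `(r₂, r₁)` of a quasi-particle datum. -/
def QPData.colorType (d : QPData) : ℕ × ℕ :=
  (∑ p ∈ Finset.range d.P2, d.n2 p, ∑ p ∈ Finset.range d.P1, d.n1 p)

/-- The total energy `−Σ_{i,p} m_{p,i}` of a quasi-particle datum. -/
def QPData.energy (d : QPData) : ℤ :=
  -(∑ p ∈ Finset.range d.P1, d.m1 p + ∑ p ∈ Finset.range d.P2, d.m2 p)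

/-- `k`-admissibility: all color-1 charges are at most `k` and all color-2 charges are
at most `2k` (equivalently, `n_{1,1} ≤ k` and `n_{1,2} ≤ 2k`, vacuously if `P_i = 0`). -/
def QPData.Admissible (k : ℕ) (d : QPData) : Prop :=
  (∀ p, p < d.P1 → d.n1 p ≤ k) ∧ (∀ p, p < d.P2 → d.n2 p ≤ 2 * k)

/-- A partition: a finite weakly decreasing list of positive integers. -/
structure Ptn where
  parts : List ℕ
  sorted : parts.Pairwise (· ≥ ·)
  pos : ∀ x ∈ parts, 0 < x

/-- The length `ℓ(λ)` of a partition. -/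
def Ptn.length (lam : Ptn) : ℕ := lam.parts.length

/-- The size `|λ|` of a partition. -/
def Ptn.size (lam : Ptn) : ℕ := lam.parts.sum

/-!
Conjugating the charges of each color gives the sequences `r_i⁽ˢ⁾`; the quasi-particles of
charge `s` occupy the block of indices `[r⁽ˢ⁺¹⁾, r⁽ˢ⁾)`. Since the charges decrease, the
bounds in (D1) and (D3) are `c(n_p) − (2p + 1) n_p`, and summing them gives
`−Σ_s (r₁⁽ˢ⁾)²` and `−Σ_s (r₂⁽ˢ⁾)² + Σ_s r₁⁽ˢ⁾ (r₂⁽²ˢ⁻¹⁾ + r₂⁽²ˢ⁾)`. The slacks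
(bound minus energy) are nonnegative and, by (D2) and (D4), increase along each block, so
on the block of charge `s` they form a partition with at most `r⁽ˢ⁾ − r⁽ˢ⁺¹⁾` parts whose
sizes add up to the energy minus `E`. Conversely the sequences `r⁽ˢ⁾` determine the charges,
hence the bounds, and the partitions then determine the energies.
-/

open Finset

lemma List.getD_filter_pos {l : List ℕ} (hl : l.Pairwise (· ≥ ·)) (j : ℕ) :
    (l.filter (0 < ·)).getD j 0 = l.getD j 0 := by
  induction l generalizing j with
  | nil => simp
  | cons a t ih =>
    rw [List.pairwise_cons] at hl
    rcases Nat.eq_zero_or_pos a with rfl | ha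
    · have ht : t = List.replicate t.length 0 :=
        List.eq_replicate_iff.2 ⟨rfl, fun b hb => Nat.le_zero.1 (hl.1 b hb)⟩
      rw [ht]
      cases j <;> simp
    · rw [List.filter_cons_of_pos (by simpa using ha)]
      cases j
      · rfl
      · exact ih hl.2 _

lemma List.sum_eq_sum_range_getD (l : List ℕ) {L : ℕ} (h : l.length ≤ L) :
    l.sum = ∑ j ∈ Finset.range L, l.getD j 0 := by
  induction l generalizing L with
  | nil => simp
  | cons a t ih =>
    have hL : L ≠ 0 := by
      rw [List.length_cons] at h
      omega
    obtain ⟨L, rfl⟩ := Nat.exists_eq_add_one_of_ne_zero hL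
    rw [Finset.sum_range_succ', List.sum_cons, ih (by simpa using h)]
    simp [add_comm]

lemma List.pairwise_map_range_of_antitoneOn {L : ℕ} {x : ℕ → ℕ}
    (hx : AntitoneOn x (Set.Iio L)) : ((List.range L).map x).Pairwise (· ≥ ·) := by
  refine List.pairwise_iff_getElem.2 fun i j hi hj hij => ?_
  simp only [List.length_map, List.length_range] at hi hj
  simpa using hx (Set.mem_Iio.2 hi) (Set.mem_Iio.2 hj) hij.le

namespace Ptn

lemma ext_getD {lam mu : Ptn} (h : ∀ j, lam.parts.getD j 0 = mu.parts.getD j 0) : lam = mu := by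
  rcases lam with ⟨l, _, hl⟩
  rcases mu with ⟨l', _, hl'⟩
  simp only [mk.injEq]
  refine List.ext_getElem? fun j => ?_
  have hj := h j
  simp only [List.getD_eq_getElem?_getD] at hj
  cases ha : l[j]? <;> cases hb : l'[j]? <;>
    simp only [ha, hb, Option.getD_none, Option.getD_some] at hj ⊢
  · exact absurd hj (hl' _ (List.mem_of_getElem? hb)).ne
  · exact absurd hj (hl _ (List.mem_of_getElem? ha)).ne'
  · exact congrArg some hj

lemma getD_antitone (lam : Ptn) : Antitone (lam.parts.getD · 0) := by
  intro i j hij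
  rcases lt_or_ge j lam.parts.length with hj | hj
  · simp only [List.getD_eq_getElem _ _ hj, List.getD_eq_getElem _ _ (hij.trans_lt hj)]
    rcases hij.eq_or_lt with rfl | hlt
    · rfl
    · exact List.pairwise_iff_getElem.1 lam.sorted i j _ hj hlt
  · simp only [List.getD_eq_default _ _ hj, zero_le]

lemma getD_of_length_le {lam : Ptn} {j : ℕ} (h : lam.length ≤ j) : lam.parts.getD j 0 = 0 :=
  List.getD_eq_default _ _ h

lemma size_eq_sum_getD {lam : Ptn} {L : ℕ} (h : lam.length ≤ L) :
    lam.size = ∑ j ∈ range L, lam.parts.getD j 0 :=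
  lam.parts.sum_eq_sum_range_getD h

def ofAntitone (L : ℕ) (x : ℕ → ℕ) (hx : AntitoneOn x (Set.Iio L)) : Ptn where
  parts := ((List.range L).map x).filter (0 < ·)
  sorted := (List.pairwise_map_range_of_antitoneOn hx).filter _
  pos a ha := by simpa using (List.mem_filter.1 ha).2

variable {L : ℕ} {x : ℕ → ℕ} {hx : AntitoneOn x (Set.Iio L)}

lemma length_ofAntitone_le : (ofAntitone L x hx).length ≤ L :=
  (List.length_filter_le _ _).trans (by simp)

lemma getD_ofAntitone {j : ℕ} (hj : j < L) : (ofAntitone L x hx).parts.getD j 0 = x j := by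
  simp only [ofAntitone, List.getD_filter_pos (List.pairwise_map_range_of_antitoneOn hx)]
  simp [hj]

lemma size_ofAntitone : (ofAntitone L x hx).size = ∑ j ∈ range L, x j := by
  rw [size_eq_sum_getD length_ofAntitone_le]
  exact sum_congr rfl fun j hj => getD_ofAntitone (mem_range.1 hj)

end Ptn

namespace QuasiParticle

/-- The conjugate of the partition `f 0 ≥ f 1 ≥ ⋯` with at most `N` nonzero parts. -/
def conj (N : ℕ) (f : ℕ → ℕ) (i : ℕ) : ℕ := #{j ∈ range N | i < f j}

section Conjugate

variable {N : ℕ} {f : ℕ → ℕ}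

lemma conj_le (i : ℕ) : conj N f i ≤ N :=
  (card_filter_le _ _).trans (card_range N).le

lemma conj_antitone : Antitone (conj N f) := fun _ _ hii' =>
  card_le_card (monotone_filter_right _ fun _ _ h => hii'.trans_lt h)

lemma lt_conj_iff (hf : Antitone f) (hN : ∀ j, N ≤ j → f j = 0) {i j : ℕ} :
    j < conj N f i ↔ i < f j := by
  constructor
  · intro hj
    by_contra! hfj
    have hsub : {j' ∈ range N | i < f j'} ⊆ range j := fun j' hj' => by
      simp only [mem_filter, mem_range] at hj' ⊢
      by_contra! hjj'
      exact absurd ((hf hjj').trans hfj) (not_le.2 hj'.2)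
    have := card_le_card hsub
    rw [card_range] at this
    exact absurd hj (not_lt.2 this)
  · intro hfj
    have hjN : j < N := by
      by_contra! hNj
      rw [hN j hNj] at hfj
      exact absurd hfj (Nat.not_lt_zero i)
    have hsub : range (j + 1) ⊆ {j' ∈ range N | i < f j'} := fun j' hj' => by
      simp only [mem_filter, mem_range] at hj' ⊢
      exact ⟨by omega, hfj.trans_le (hf (by omega))⟩
    simpa [conj] using card_le_card hsub

lemma conj_eq_zero {i : ℕ} (hi : ∀ j < N, f j ≤ i) : conj N f i = 0 := by
  rw [conj, card_eq_zero, filter_eq_empty_iff]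
  exact fun j hj => not_lt.2 (hi j (mem_range.1 hj))

lemma conj_conj (hf : Antitone f) (hN : ∀ j, N ≤ j → f j = 0) {M : ℕ} (hM : f 0 ≤ M) :
    conj M (conj N f) = f := by
  funext j
  refine eq_of_forall_lt_iff fun i => ?_
  have hconj : ∀ i, M ≤ i → conj N f i = 0 := fun i hi =>
    conj_eq_zero fun j _ => (hf j.zero_le).trans (hM.trans hi)
  rw [lt_conj_iff conj_antitone hconj, lt_conj_iff hf hN]

/-- Both sides count the weighted lattice points `(p, t)` with `p < P` and `t < f p`. -/
lemma sum_sum_range_eq_sum_conj_smul {R : Type*} [AddCommMonoid R] (w : ℕ → R) {P M : ℕ}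
    (hM : ∀ p < P, f p ≤ M) :
    ∑ p ∈ range P, ∑ t ∈ range (f p), w t = ∑ t ∈ range M, conj P f t • w t := by
  calc ∑ p ∈ range P, ∑ t ∈ range (f p), w t
      = ∑ p ∈ range P, ∑ t ∈ range M, if t < f p then w t else 0 := by
        refine sum_congr rfl fun p hp => ?_
        rw [← sum_filter]
        congr 1
        ext t
        simp only [mem_filter, mem_range]
        have := hM p (mem_range.1 hp)
        omega
    _ = ∑ t ∈ range M, ∑ p ∈ range P, if t < f p then w t else 0 := sum_comm
    _ = ∑ t ∈ range M, conj P f t • w t := by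
        simp only [← sum_filter, sum_const, conj]

end Conjugate

section Sums

variable {R : Type*} [AddCommMonoid R]

lemma finsum_eq_sum_range {g : ℕ → R} {N : ℕ} (h : ∀ s, N ≤ s → g s = 0) :
    ∑ᶠ s, g s = ∑ s ∈ range N, g s :=
  finsum_eq_sum_of_support_subset _ fun s hs => by
    simp only [coe_range, Set.mem_Iio]
    by_contra! hNs
    exact hs (h s hNs)

lemma sum_range_two_mul (g : ℕ → R) (K : ℕ) :
    ∑ t ∈ range (2 * K), g t = ∑ s ∈ range K, (g (2 * s) + g (2 * s + 1)) := by
  induction K with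
  | zero => simp
  | succ K ih => rw [show 2 * (K + 1) = 2 * K + 1 + 1 by ring, sum_range_succ, sum_range_succ,
      ih, sum_range_succ, add_assoc]

lemma sum_range_two_mul_add_one (k : ℕ) : ∑ p ∈ range k, (2 * p + 1) = k ^ 2 := by
  induction k with
  | zero => simp
  | succ k ih => rw [sum_range_succ, ih]; ring

variable {P M : ℕ} {f : ℕ → ℕ}

lemma sum_conj (hM : ∀ p < P, f p ≤ M) : ∑ t ∈ range M, conj P f t = ∑ p ∈ range P, f p := by
  simpa using (sum_sum_range_eq_sum_conj_smul (fun _ => (1 : ℕ)) hM).symm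

lemma sum_two_mul_add_one_mul (hf : Antitone f) (hP : ∀ p, P ≤ p → f p = 0) (hM : f 0 ≤ M) :
    ∑ p ∈ range P, (2 * p + 1) * f p = ∑ s ∈ range M, conj P f s ^ 2 := by
  have h := sum_sum_range_eq_sum_conj_smul (fun p => 2 * p + 1) (f := conj P f)
    (P := M) (M := P) fun s _ => conj_le s
  simp only [sum_range_two_mul_add_one, conj_conj hf hP hM, smul_eq_mul] at h
  rw [h]
  exact sum_congr rfl fun p _ => mul_comm _ _

lemma sum_sum_min_two_mul {P₁ P₂ K : ℕ} {f₁ f₂ : ℕ → ℕ}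
    (h₂ : ∀ p < P₂, f₂ p ≤ 2 * K) :
    ∑ p ∈ range P₂, ∑ q ∈ range P₁, min (2 * f₁ q) (f₂ p)
      = ∑ s ∈ range K, conj P₁ f₁ s * (conj P₂ f₂ (2 * s) + conj P₂ f₂ (2 * s + 1)) := by
  have hmin : ∀ k, ∑ q ∈ range P₁, min (2 * f₁ q) k = ∑ t ∈ range k, conj P₁ f₁ (t / 2) := by
    intro k
    rw [← sum_conj (f := fun q => min (2 * f₁ q) k) fun q _ => min_le_right _ _]
    refine sum_congr rfl fun t ht => ?_
    simp only [conj, mem_range] at ht ⊢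
    congr 1
    ext q
    simp only [mem_filter, mem_range]
    omega
  simp only [hmin, sum_sum_range_eq_sum_conj_smul _ h₂, sum_range_two_mul, smul_eq_mul]
  refine sum_congr rfl fun s _ => ?_
  rw [show 2 * s / 2 = s by omega, show (2 * s + 1) / 2 = s by omega]
  ring

end Sums

section Blocks

variable {ρ x : ℕ → ℕ}

lemma antitoneOn_reverse_block (hx : ∀ s, MonotoneOn x (Set.Ico (ρ (s + 1)) (ρ s))) (s : ℕ) :
    AntitoneOn (fun j => x (ρ s - 1 - j)) (Set.Iio (ρ s - ρ (s + 1))) := fun i hi j hj hij => by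
  simp only [Set.mem_Iio] at hi hj
  exact hx s (by simp only [Set.mem_Ico]; omega) (by simp only [Set.mem_Ico]; omega) (by omega)

/-- The partition formed by the values of `x` on the block `[ρ (s + 1), ρ s)`, read from the
right end of the block. -/
def blockPtn (ρ x : ℕ → ℕ) (hx : ∀ s, MonotoneOn x (Set.Ico (ρ (s + 1)) (ρ s))) (s : ℕ) :
    Ptn :=
  Ptn.ofAntitone (ρ s - ρ (s + 1)) (fun j => x (ρ s - 1 - j)) (antitoneOn_reverse_block hx s)

variable {hx : ∀ s, MonotoneOn x (Set.Ico (ρ (s + 1)) (ρ s))}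

lemma length_blockPtn_le (s : ℕ) : (blockPtn ρ x hx s).length ≤ ρ s - ρ (s + 1) :=
  Ptn.length_ofAntitone_le

lemma getD_blockPtn {s p : ℕ} (hp : p ∈ Set.Ico (ρ (s + 1)) (ρ s)) :
    (blockPtn ρ x hx s).parts.getD (ρ s - 1 - p) 0 = x p := by
  rw [Set.mem_Ico] at hp
  rw [blockPtn, Ptn.getD_ofAntitone (by omega)]
  congr 1
  omega

lemma size_blockPtn (s : ℕ) : (blockPtn ρ x hx s).size = ∑ p ∈ Ico (ρ (s + 1)) (ρ s), x p := by
  rw [blockPtn, Ptn.size_ofAntitone, sum_Ico_eq_sum_range, ← sum_range_reflect]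
  refine sum_congr rfl fun j hj => ?_
  rw [mem_range] at hj
  congr 1
  omega

lemma sum_size_blockPtn (hρ : Antitone ρ) {N : ℕ} (hN : ρ N = 0) :
    ∑ s ∈ range N, (blockPtn ρ x hx s).size = ∑ p ∈ range (ρ 0), x p := by
  have telescope : ∀ K, ∑ s ∈ range K, (blockPtn ρ x hx s).size = ∑ p ∈ Ico (ρ K) (ρ 0), x p := by
    intro K
    induction K with
    | zero => simp
    | succ K ih =>
      rw [sum_range_succ, ih, size_blockPtn, add_comm,
        sum_Ico_consecutive _ (hρ K.le_succ) (hρ (Nat.zero_le K))]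
  rw [telescope, hN, range_eq_Ico]

end Blocks

lemma antitone_of_anti_of_eq_zero {P : ℕ} {n : ℕ → ℕ} (hanti : ∀ p q, p ≤ q → q < P → n q ≤ n p)
    (hzero : ∀ p, P ≤ p → n p = 0) : Antitone n := fun p q hpq => by
  rcases lt_or_ge q P with hq | hq
  · exact hanti p q hpq hq
  · rw [hzero q hq]
    exact Nat.zero_le _

/-- The right-hand side of the difference conditions (D1) and (D3), where `c k` is the
interaction of a quasi-particle of charge `k` with those of the other color. -/
def bound (c : ℕ → ℤ) (n : ℕ → ℕ) (p : ℕ) : ℤ :=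
  -(n p : ℤ) + c (n p) - 2 * ∑ p' ∈ range p, (min (n p) (n p') : ℤ)

lemma bound_eq {c : ℕ → ℤ} {n : ℕ → ℕ} (hn : Antitone n) (p : ℕ) :
    bound c n p = c (n p) - (2 * p + 1) * n p := by
  have hmin : ∀ p' ∈ range p, (min (n p) (n p') : ℤ) = n p := fun p' hp' =>
    min_eq_left (Int.ofNat_le.2 (hn (mem_range.1 hp').le))
  rw [bound, sum_congr rfl hmin, sum_const, card_range, nsmul_eq_mul]
  ring

/-- (D1)–(D4) for the quasi-particles of one color: `c = 0` for color 1 and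
`c = crossOffset P₁ n₁` for color 2. -/
structure IsColorData (c : ℕ → ℤ) (P : ℕ) (n : ℕ → ℕ) (m : ℕ → ℤ) : Prop where
  n_pos : ∀ p < P, 0 < n p
  n_zero : ∀ p, P ≤ p → n p = 0
  n_antitone : Antitone n
  m_zero : ∀ p, P ≤ p → m p = 0
  m_le : ∀ p < P, m p ≤ bound c n p
  m_succ_le : ∀ p, p + 1 < P → n (p + 1) = n p → m (p + 1) ≤ m p - 2 * n p

def slack (c : ℕ → ℤ) (n : ℕ → ℕ) (m : ℕ → ℤ) (p : ℕ) : ℕ := (bound c n p - m p).toNat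

/-- The conditions on `ρ s = r⁽ˢ⁺¹⁾` and `π s = π⁽ˢ⁺¹⁾` for one color of the fermionic formula. -/
def IsFermionicPair (ρ : ℕ → ℕ) (π : ℕ → Ptn) : Prop :=
  Antitone ρ ∧ (∃ N, ∀ s, N ≤ s → ρ s = 0) ∧ ∀ s, (π s).length ≤ ρ s - ρ (s + 1)

lemma IsFermionicPair.exists_parts_eq_nil {ρ : ℕ → ℕ} {π : ℕ → Ptn} (h : IsFermionicPair ρ π) :
    ∃ N, ∀ s, N ≤ s → (π s).parts = [] := by
  obtain ⟨-, ⟨N, hN⟩, hπ⟩ := h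
  refine ⟨N, fun s hs => List.eq_nil_of_length_eq_zero ?_⟩
  have := hπ s
  rw [hN s hs, Nat.zero_sub] at this
  exact Nat.le_zero.1 this

namespace IsColorData

section

variable {c : ℕ → ℤ} {P : ℕ} {n : ℕ → ℕ} {m : ℕ → ℤ} (h : IsColorData c P n m)
include h

lemma lt_conj_iff {s p : ℕ} : p < conj P n s ↔ s < n p :=
  QuasiParticle.lt_conj_iff h.n_antitone h.n_zero

lemma conj_zero : conj P n 0 = P :=
  eq_of_forall_lt_iff fun p => h.lt_conj_iff.trans
    ⟨fun hp => by by_contra! hPp; rw [h.n_zero p hPp] at hp; exact lt_irrefl 0 hp, h.n_pos p⟩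

lemma conj_eq_zero {s : ℕ} (hs : n 0 ≤ s) : conj P n s = 0 :=
  QuasiParticle.conj_eq_zero fun p _ => (h.n_antitone p.zero_le).trans hs

lemma mem_block_iff {s p : ℕ} : p ∈ Set.Ico (conj P n (s + 1)) (conj P n s) ↔ n p = s + 1 := by
  rw [Set.mem_Ico, ← not_lt, h.lt_conj_iff, h.lt_conj_iff]
  omega

lemma m_eq {p : ℕ} (hp : p < P) : m p = bound c n p - slack c n m p := by
  rw [slack, Int.toNat_of_nonneg (sub_nonneg.2 (h.m_le p hp))]
  ring

lemma slack_monotoneOn_block (s : ℕ) :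
    MonotoneOn (slack c n m) (Set.Ico (conj P n (s + 1)) (conj P n s)) := by
  refine monotoneOn_of_le_succ Set.ordConnected_Ico fun p _ hp hp' => ?_
  rw [Order.succ_eq_add_one, h.mem_block_iff] at hp'
  rw [h.mem_block_iff] at hp
  have hP : p + 1 < P := by
    by_contra! hPp
    rw [h.n_zero _ hPp] at hp'
    exact absurd hp' (Nat.succ_ne_zero s).symm
  have hm := h.m_succ_le p hP (hp'.trans hp.symm)
  rw [Order.succ_eq_add_one, slack, slack, bound_eq h.n_antitone, bound_eq h.n_antitone, hp, hp']
  apply Int.toNat_le_toNat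
  rw [hp] at hm
  push_cast at hm ⊢
  linarith

/-- The partitions `π⁽ˢ⁺¹⁾`: on the block of quasi-particles of charge `s + 1`, the slacks of
the energies increase (D2, D4) and form a partition. -/
def blocks : ℕ → Ptn :=
  blockPtn (conj P n) (slack c n m) h.slack_monotoneOn_block

lemma getD_blocks {s p : ℕ} (hp : n p = s + 1) :
    (h.blocks s).parts.getD (conj P n s - 1 - p) 0 = slack c n m p :=
  getD_blockPtn (h.mem_block_iff.2 hp)

lemma isFermionicPair : IsFermionicPair (conj P n) h.blocks :=
  ⟨conj_antitone, ⟨n 0, fun _ => h.conj_eq_zero⟩, length_blockPtn_le⟩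

lemma finsum_conj : ∑ᶠ s, conj P n s = ∑ p ∈ range P, n p := by
  rw [finsum_eq_sum_range fun s => h.conj_eq_zero]
  exact sum_conj fun p _ => h.n_antitone p.zero_le

lemma finsum_conj_sq : ∑ᶠ s, (conj P n s : ℤ) ^ 2 = ∑ p ∈ range P, (2 * p + 1) * (n p : ℤ) := by
  rw [finsum_eq_sum_range fun s hs => by rw [h.conj_eq_zero hs]; simp]
  exact_mod_cast (sum_two_mul_add_one_mul h.n_antitone h.n_zero le_rfl).symm

lemma finsum_size_blocks : ∑ᶠ s, ((h.blocks s).size : ℤ) = ∑ p ∈ range P, (slack c n m p : ℤ) := by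
  have hvanish : ∀ s, n 0 ≤ s → ((h.blocks s).size : ℤ) = 0 := fun s hs => by
    rw [blocks, size_blockPtn, h.conj_eq_zero hs, h.conj_eq_zero (hs.trans s.le_succ)]
    simp
  rw [finsum_eq_sum_range hvanish, ← Nat.cast_sum, blocks,
    sum_size_blockPtn conj_antitone (h.conj_eq_zero le_rfl), h.conj_zero, Nat.cast_sum]

lemma sum_m : ∑ p ∈ range P, m p = ∑ p ∈ range P, c (n p)
      - ∑ᶠ s, (conj P n s : ℤ) ^ 2 - ∑ᶠ s, ((h.blocks s).size : ℤ) := by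
  rw [h.finsum_conj_sq, h.finsum_size_blocks, ← sum_sub_distrib, ← sum_sub_distrib]
  refine sum_congr rfl fun p hp => ?_
  rw [h.m_eq (mem_range.1 hp), bound_eq h.n_antitone]

end

lemma eq_of_conj_eq_of_blocks_eq {c c' : ℕ → ℤ} {P P' : ℕ} {n n' : ℕ → ℕ} {m m' : ℕ → ℤ}
    (h : IsColorData c P n m) (h' : IsColorData c' P' n' m') (hc : c = c')
    (hρ : conj P n = conj P' n') (hπ : h.blocks = h'.blocks) : P = P' ∧ n = n' ∧ m = m' := by
  subst hc
  have hn : n = n' := funext fun p => eq_of_forall_lt_iff fun s => by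
    rw [← h.lt_conj_iff, hρ, h'.lt_conj_iff]
  have hP : P = P' := by rw [← h.conj_zero, hρ, h'.conj_zero]
  subst hn hP
  refine ⟨rfl, rfl, funext fun p => ?_⟩
  rcases lt_or_ge p P with hp | hp
  · obtain ⟨s, hs⟩ := Nat.exists_eq_add_one_of_ne_zero (h.n_pos p hp).ne'
    rw [h.m_eq hp, h'.m_eq hp, ← h.getD_blocks hs, ← h'.getD_blocks hs, hπ]
  · rw [h.m_zero p hp, h'.m_zero p hp]

/-- The energies for the charges `n` whose slacks are read off from the partitions `π`: the
slack of the `p`-th quasi-particle is the part of `π` at its position in its block. -/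
def energiesOf (c : ℕ → ℤ) (ρ : ℕ → ℕ) (π : ℕ → Ptn) (n : ℕ → ℕ) (p : ℕ) : ℤ :=
  if p < ρ 0 then bound c n p - (π (n p - 1)).parts.getD (ρ (n p - 1) - 1 - p) 0 else 0

section OfFermionicPair

variable (c : ℕ → ℤ) (π : ℕ → Ptn) {ρ : ℕ → ℕ} {N : ℕ} (hρ : Antitone ρ)
  (hN : ∀ s, N ≤ s → ρ s = 0)
include hρ hN

lemma isColorData_energiesOf : IsColorData c (ρ 0) (conj N ρ) (energiesOf c ρ π (conj N ρ)) where
  n_pos p hp := (QuasiParticle.lt_conj_iff hρ hN).2 hp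
  n_zero p hp := QuasiParticle.conj_eq_zero fun s _ => (hρ s.zero_le).trans hp
  n_antitone := conj_antitone
  m_zero p hp := if_neg (not_lt.2 hp)
  m_le p hp := by
    rw [energiesOf, if_pos hp]
    exact sub_le_self _ (Nat.cast_nonneg _)
  m_succ_le p hp hnp := by
    have hbound : bound c (conj N ρ) (p + 1) = bound c (conj N ρ) p - 2 * conj N ρ p := by
      rw [bound_eq conj_antitone, bound_eq conj_antitone, hnp]
      push_cast
      ring
    rw [energiesOf, energiesOf, if_pos hp, if_pos (by omega), hbound, hnp]
    have := Ptn.getD_antitone (π (conj N ρ p - 1))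
      (show ρ (conj N ρ p - 1) - 1 - (p + 1) ≤ ρ (conj N ρ p - 1) - 1 - p by omega)
    have := Int.ofNat_le.2 this
    linarith

lemma blocks_isColorData_energiesOf (hπ : ∀ s, (π s).length ≤ ρ s - ρ (s + 1)) :
    (isColorData_energiesOf c π hρ hN).blocks = π := by
  have hconj : conj (ρ 0) (conj N ρ) = ρ := conj_conj hρ hN le_rfl
  refine funext fun s => Ptn.ext_getD fun j => ?_
  rcases lt_or_ge j (ρ s - ρ (s + 1)) with hj | hj
  · set p := ρ s - 1 - j
    have hnp : conj N ρ p = s + 1 := by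
      have h₁ : p < ρ s := by omega
      have h₂ : ¬ p < ρ (s + 1) := by omega
      rw [← QuasiParticle.lt_conj_iff hρ hN] at h₁ h₂
      omega
    have hblock := (isColorData_energiesOf c π hρ hN).getD_blocks hnp
    rw [hconj, show ρ s - 1 - p = j by omega] at hblock
    rw [hblock, slack, energiesOf, if_pos (hρ (Nat.zero_le s) |>.trans_lt' (by omega)),
      sub_sub_cancel, Int.toNat_natCast, hnp, Nat.add_sub_cancel, show ρ s - 1 - p = j by omega]
  · rw [Ptn.getD_of_length_le ((hπ s).trans hj), Ptn.getD_of_length_le]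
    exact (length_blockPtn_le s).trans (by rw [hconj]; exact hj)

end OfFermionicPair

lemma exists_of_isFermionicPair (c : ℕ → ℤ) {ρ : ℕ → ℕ} {π : ℕ → Ptn}
    (hρπ : IsFermionicPair ρ π) :
    ∃ n m, ∃ h : IsColorData c (ρ 0) n m, conj (ρ 0) n = ρ ∧ h.blocks = π := by
  obtain ⟨hρ, ⟨N, hN⟩, hπ⟩ := hρπ
  exact ⟨_, _, isColorData_energiesOf c π hρ hN, conj_conj hρ hN le_rfl,
    blocks_isColorData_energiesOf c π hρ hN hπ⟩

end IsColorData

end QuasiParticle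

open QuasiParticle

attribute [ext] QPData

namespace QPData

/-- The interaction `Σ_q min(2 n_{q,1}, k)` in (D3) of a color-2 quasi-particle of charge `k`
with the color-1 quasi-particles. -/
def crossOffset (P₁ : ℕ) (n₁ : ℕ → ℕ) (k : ℕ) : ℤ := ∑ q ∈ range P₁, (min (2 * n₁ q) k : ℤ)

lemma sum_crossOffset {P₁ P₂ : ℕ} {n₁ n₂ : ℕ → ℕ} (hn₂ : Antitone n₂) :
    ∑ p ∈ range P₂, crossOffset P₁ n₁ (n₂ p)
      = ∑ᶠ s, (conj P₁ n₁ s : ℤ) * (conj P₂ n₂ (2 * s) + conj P₂ n₂ (2 * s + 1)) := by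
  have hvanish : ∀ s, n₂ 0 ≤ s → conj P₂ n₂ (2 * s) = 0 ∧ conj P₂ n₂ (2 * s + 1) = 0 :=
    fun s hs => ⟨conj_eq_zero fun p _ => (hn₂ p.zero_le).trans (by omega),
      conj_eq_zero fun p _ => (hn₂ p.zero_le).trans (by omega)⟩
  rw [finsum_eq_sum_range (N := n₂ 0) fun s hs => by simp [(hvanish s hs).1, (hvanish s hs).2]]
  have := sum_sum_min_two_mul (P₁ := P₁) (P₂ := P₂) (K := n₂ 0) (f₁ := n₁) fun p _ =>
    (hn₂ p.zero_le).trans (Nat.le_mul_of_pos_left _ two_pos)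
  simp only [crossOffset]
  exact_mod_cast this

lemma isColorData₁ (d : QPData) : IsColorData 0 d.P1 d.n1 d.m1 where
  n_pos := d.n1_pos
  n_zero := d.n1_zero
  n_antitone := antitone_of_anti_of_eq_zero d.n1_anti d.n1_zero
  m_zero := d.m1_zero
  m_le p hp := by simpa [bound] using d.D1 p hp
  m_succ_le := d.D2

lemma isColorData₂ (d : QPData) : IsColorData (crossOffset d.P1 d.n1) d.P2 d.n2 d.m2 where
  n_pos := d.n2_pos
  n_zero := d.n2_zero
  n_antitone := antitone_of_anti_of_eq_zero d.n2_anti d.n2_zero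
  m_zero := d.m2_zero
  m_le := d.D3
  m_succ_le := d.D4

def ofIsColorData {P₁ P₂ : ℕ} {n₁ n₂ : ℕ → ℕ} {m₁ m₂ : ℕ → ℤ} (h₁ : IsColorData 0 P₁ n₁ m₁)
    (h₂ : IsColorData (crossOffset P₁ n₁) P₂ n₂ m₂) : QPData where
  P1 := P₁
  P2 := P₂
  n1 := n₁
  n2 := n₂
  m1 := m₁
  m2 := m₂
  n1_pos := h₁.n_pos
  n2_pos := h₂.n_pos
  n1_anti p q hpq _ := h₁.n_antitone hpq
  n2_anti p q hpq _ := h₂.n_antitone hpq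
  n1_zero := h₁.n_zero
  n2_zero := h₂.n_zero
  m1_zero := h₁.m_zero
  m2_zero := h₂.m_zero
  D1 p hp := by simpa [bound] using h₁.m_le p hp
  D2 := h₁.m_succ_le
  D3 := h₂.m_le
  D4 := h₂.m_succ_le

/-- The datum `(ρ, σ, π, τ)` of the fermionic formula, where `ρ s = r₁⁽ˢ⁺¹⁾`, `σ s = r₂⁽ˢ⁺¹⁾`. -/
def toTuple (d : QPData) : (ℕ → ℕ) × (ℕ → ℕ) × (ℕ → Ptn) × (ℕ → Ptn) :=
  (conj d.P1 d.n1, conj d.P2 d.n2, d.isColorData₁.blocks, d.isColorData₂.blocks)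

lemma toTuple_injective : Function.Injective toTuple := fun d d' h => by
  simp only [toTuple, Prod.mk.injEq] at h
  obtain ⟨hρ, hσ, hπ, hτ⟩ := h
  obtain ⟨hP₁, hn₁, hm₁⟩ :=
    d.isColorData₁.eq_of_conj_eq_of_blocks_eq d'.isColorData₁ rfl hρ hπ
  obtain ⟨hP₂, hn₂, hm₂⟩ :=
    d.isColorData₂.eq_of_conj_eq_of_blocks_eq d'.isColorData₂ (by rw [hP₁, hn₁]) hσ hτ
  exact QPData.ext hP₁ hP₂ hn₁ hn₂ hm₁ hm₂

lemma exists_toTuple_eq {ρ σ : ℕ → ℕ} {π τ : ℕ → Ptn} (hρπ : IsFermionicPair ρ π)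
    (hστ : IsFermionicPair σ τ) : ∃ d : QPData, d.toTuple = (ρ, σ, π, τ) := by
  obtain ⟨n₁, m₁, h₁, hρ, hπ⟩ := IsColorData.exists_of_isFermionicPair 0 hρπ
  obtain ⟨n₂, m₂, h₂, hσ, hτ⟩ := IsColorData.exists_of_isFermionicPair (crossOffset (ρ 0) n₁) hστ
  exact ⟨ofIsColorData h₁ h₂, Prod.ext hρ (Prod.ext hσ (Prod.ext hπ hτ))⟩

/-- The quadratic form `E(ρ, σ)`. -/
noncomputable def quadraticEnergy (ρ σ : ℕ → ℕ) : ℤ :=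
  (∑ᶠ s, (ρ s : ℤ) ^ 2) + (∑ᶠ s, (σ s : ℤ) ^ 2)
    - ∑ᶠ s, (ρ s : ℤ) * ((σ (2 * s) : ℤ) + (σ (2 * s + 1) : ℤ))

lemma colorType_eq (d : QPData) :
    d.colorType = (∑ᶠ s, conj d.P2 d.n2 s, ∑ᶠ s, conj d.P1 d.n1 s) := by
  rw [colorType, d.isColorData₁.finsum_conj, d.isColorData₂.finsum_conj]

lemma energy_eq (d : QPData) :
    d.energy = ∑ᶠ s, ((d.isColorData₁.blocks s).size : ℤ)
      + ∑ᶠ s, ((d.isColorData₂.blocks s).size : ℤ)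
      + quadraticEnergy (conj d.P1 d.n1) (conj d.P2 d.n2) := by
  rw [energy, d.isColorData₁.sum_m, d.isColorData₂.sum_m,
    sum_crossOffset d.isColorData₂.n_antitone, quadraticEnergy]
  simp only [Pi.zero_apply, sum_const_zero]
  ring

end QPData

/-- The conditions on `x = (ρ, σ, π, τ)` counted by the fermionic formula. -/
def IsFermionicTuple (m : ℤ) (r1 r2 : ℕ) (x : (ℕ → ℕ) × (ℕ → ℕ) × (ℕ → Ptn) × (ℕ → Ptn)) :
    Prop :=
  (∀ i j, i ≤ j → x.1 j ≤ x.1 i) ∧ (∃ N, ∀ s, N ≤ s → x.1 s = 0) ∧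
  (∑ᶠ s, x.1 s = r1) ∧
  (∀ i j, i ≤ j → x.2.1 j ≤ x.2.1 i) ∧ (∃ N, ∀ s, N ≤ s → x.2.1 s = 0) ∧
  (∑ᶠ s, x.2.1 s = r2) ∧
  (∀ s, (x.2.2.1 s).length ≤ x.1 s - x.1 (s + 1)) ∧
  (∃ N, ∀ s, N ≤ s → (x.2.2.1 s).parts = []) ∧
  (∀ s, (x.2.2.2 s).length ≤ x.2.1 s - x.2.1 (s + 1)) ∧
  (∃ N, ∀ s, N ≤ s → (x.2.2.2 s).parts = []) ∧
  ((∑ᶠ s, ((x.2.2.1 s).size : ℤ)) + (∑ᶠ s, ((x.2.2.2 s).size : ℤ))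
    = m - ((∑ᶠ s, (x.1 s : ℤ) ^ 2) + (∑ᶠ s, (x.2.1 s : ℤ) ^ 2)
        - ∑ᶠ s, (x.1 s : ℤ) * ((x.2.1 (2 * s) : ℤ) + (x.2.1 (2 * s + 1) : ℤ))))

lemma isFermionicTuple_iff {m : ℤ} {r1 r2 : ℕ} {ρ σ : ℕ → ℕ} {π τ : ℕ → Ptn} :
    IsFermionicTuple m r1 r2 (ρ, σ, π, τ) ↔
      IsFermionicPair ρ π ∧ IsFermionicPair σ τ ∧ ∑ᶠ s, ρ s = r1 ∧ ∑ᶠ s, σ s = r2 ∧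
        ∑ᶠ s, ((π s).size : ℤ) + ∑ᶠ s, ((τ s).size : ℤ) + QPData.quadraticEnergy ρ σ = m := by
  rw [QPData.quadraticEnergy]
  constructor
  · rintro ⟨hρ, hρN, hr1, hσ, hσN, hr2, hπ, -, hτ, -, he⟩
    exact ⟨⟨fun i j => hρ i j, hρN, hπ⟩, ⟨fun i j => hσ i j, hσN, hτ⟩, hr1, hr2, by linarith⟩
  · rintro ⟨hρπ, hστ, hr1, hr2, he⟩
    exact ⟨fun i j hij => hρπ.1 hij, hρπ.2.1, hr1, fun i j hij => hστ.1 hij, hστ.2.1, hr2,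
      hρπ.2.2, hρπ.exists_parts_eq_nil, hστ.2.2, hστ.exists_parts_eq_nil, by linarith⟩

lemma QPData.isFermionicTuple_toTuple_iff {m : ℤ} {r1 r2 : ℕ} (d : QPData) :
    IsFermionicTuple m r1 r2 d.toTuple ↔ d.colorType = (r2, r1) ∧ d.energy = m := by
  rw [toTuple, isFermionicTuple_iff, colorType_eq, energy_eq, Prod.mk.injEq]
  simp only [d.isColorData₁.isFermionicPair, d.isColorData₂.isFermionicPair, true_and]
  tauto

/-- For every integer `m` and nonnegative integers `r₁, r₂`, the
number of quasi-particle data (with no bound on the charges) of color-type `(r₂, r₁)`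
and total energy `m` equals the number of tuples `(ρ, σ, π, τ)` where `ρ, σ` are
weakly decreasing eventually-zero sequences of nonnegative integers with
`Σ_s ρ_s = r₁`, `Σ_s σ_s = r₂` (`ρ s` denotes the paper's `r₁⁽ˢ⁺¹⁾`, etc.), and
`(π⁽ˢ⁾)_{s≥1}`, `(τ⁽ˢ⁾)_{s≥1}` are families of partitions, all but finitely many
empty, with `ℓ(π⁽ˢ⁾) ≤ r₁⁽ˢ⁾ − r₁⁽ˢ⁺¹⁾`, `ℓ(τ⁽ˢ⁾) ≤ r₂⁽ˢ⁾ − r₂⁽ˢ⁺¹⁾` for all `s`, and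
`Σ_s |π⁽ˢ⁾| + Σ_s |τ⁽ˢ⁾| = m − E(ρ,σ)`, where
`E(ρ,σ) = Σ_s (r₁⁽ˢ⁾)² + Σ_s (r₂⁽ˢ⁾)² − Σ_s r₁⁽ˢ⁾ (r₂⁽²ˢ⁻¹⁾ + r₂⁽²ˢ⁾)`.
(Counting such tuples realizes the sum over all pairs `(ρ, σ)` of the number of
corresponding families of partitions.) -/
theorem card_qpdata_eq_fermionic_count
    (m : ℤ) (r1 r2 : ℕ) :
    Nat.card {d : QPData // d.colorType = (r2, r1) ∧ d.energy = m}
      = Nat.card {x : (ℕ → ℕ) × (ℕ → ℕ) × (ℕ → Ptn) × (ℕ → Ptn) //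
          (∀ i j, i ≤ j → x.1 j ≤ x.1 i) ∧ (∃ N, ∀ s, N ≤ s → x.1 s = 0) ∧
          (∑ᶠ s, x.1 s = r1) ∧
          (∀ i j, i ≤ j → x.2.1 j ≤ x.2.1 i) ∧ (∃ N, ∀ s, N ≤ s → x.2.1 s = 0) ∧
          (∑ᶠ s, x.2.1 s = r2) ∧
          (∀ s, (x.2.2.1 s).length ≤ x.1 s - x.1 (s + 1)) ∧
          (∃ N, ∀ s, N ≤ s → (x.2.2.1 s).parts = []) ∧
          (∀ s, (x.2.2.2 s).length ≤ x.2.1 s - x.2.1 (s + 1)) ∧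
          (∃ N, ∀ s, N ≤ s → (x.2.2.2 s).parts = []) ∧
          ((∑ᶠ s, ((x.2.2.1 s).size : ℤ)) + (∑ᶠ s, ((x.2.2.2 s).size : ℤ))
            = m - ((∑ᶠ s, (x.1 s : ℤ) ^ 2) + (∑ᶠ s, (x.2.1 s : ℤ) ^ 2)
                - ∑ᶠ s, (x.1 s : ℤ) * ((x.2.1 (2 * s) : ℤ) + (x.2.1 (2 * s + 1) : ℤ))))} := by
  refine Nat.card_congr (Equiv.ofBijective
    (fun d => ⟨d.1.toTuple, d.1.isFermionicTuple_toTuple_iff.2 d.2⟩) ⟨fun d d' hdd' => ?_, ?_⟩)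
  · exact Subtype.ext (QPData.toTuple_injective (congrArg Subtype.val hdd'))
  · rintro ⟨⟨ρ, σ, π, τ⟩, hx⟩
    obtain ⟨hρπ, hστ, -⟩ := isFermionicTuple_iff.1 hx
    obtain ⟨d, hd⟩ := QPData.exists_toTuple_eq hρπ hστ
    exact ⟨⟨d, d.isFermionicTuple_toTuple_iff.1 (hd ▸ hx)⟩, Subtype.ext hd⟩
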